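/- arXiv:math/0101256 — 4 statements merged into one kernel-verified Lean document; each statement's English description precedes it below -/
import Mathlib

section
/- Let p : H → G be a continuous surjective group homomorphism between Hausdorff topological groups which is a covering map, and suppose its kernel C is finite and contained in the center of H. For g ≥ 2, let Φ : Hom(π, H) → Hom(π, G) be the induced map (a₁,…,a_{2g}) ↦ (p(a₁),…,p(a_{2g})). Then the corestriction of Φ onto its range (with the subspace topology) is a covering map, whose fibers are exactly the orbits of the free action of C^{2g} on Hom(π, H) given by (c₁,…,c_{2g})·(a₁,…,a_{2g}) = (c₁a₁,…,c_{2g}a_{2g}). -/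
open Set Topology

section Aux

theorem aux_conj_central_cancel {H : Type*} [Group H] (u Y : H) (hu : ∀ x, u * x = x * u) :
    u * Y * u⁻¹ = Y := by
  rw [hu Y, mul_assoc]; simp

theorem aux_key_comm {H : Type*} [Group H] (z w a b : H) (hz : ∀ x, z * x = x * z)
    (hw : ∀ x, w * x = x * w) :
    z * a * (w * b) * (z * a)⁻¹ * (w * b)⁻¹ = a * b * a⁻¹ * b⁻¹ := by
  have s1 : z * a * (w * b) * (z * a)⁻¹ = a * (w * b) * a⁻¹ := by
    calc z * a * (w * b) * (z * a)⁻¹ = z * (a * (w * b) * a⁻¹) * z⁻¹ := by group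
    _ = a * (w * b) * a⁻¹ := aux_conj_central_cancel _ _ hz
  rw [s1]
  have e1 : a * (w * b) = w * (a * b) := by rw [← mul_assoc, ← hw a, mul_assoc]
  rw [e1]
  calc w * (a * b) * a⁻¹ * (w * b)⁻¹ = w * (a * b * a⁻¹ * b⁻¹) * w⁻¹ := by group
  _ = a * b * a⁻¹ * b⁻¹ := aux_conj_central_cancel _ _ hw

end Aux

/-- The surface group relation: a tuple `(a₁, …, a_{2g}) ∈ K^{2g}` satisfies
`∏_{i=1}^{g} a_i a_{g+i} a_i⁻¹ a_{g+i}⁻¹ = 1`. -/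
def surfaceRel (g : ℕ) {K : Type*} [Group K] (a : Fin (2 * g) → K) : Prop :=
  ((List.finRange g).map fun i : Fin g =>
      a ⟨i.1, by omega⟩ * a ⟨g + i.1, by omega⟩ *
        (a ⟨i.1, by omega⟩)⁻¹ * (a ⟨g + i.1, by omega⟩)⁻¹).prod = 1

theorem surfaceRel_central_mul (g : ℕ) {H : Type*} [Group H] (c a : Fin (2 * g) → H)
    (hc : ∀ i, ∀ x, c i * x = x * c i) (ha : surfaceRel g a) :
    surfaceRel g (fun i => c i * a i) := by
  unfold surfaceRel at ha ⊢
  rw [← ha]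
  congr 1
  apply List.map_congr_left
  intro i _
  exact aux_key_comm _ _ _ _ (hc _) (hc _)

theorem isCoveringMap_of_finite_free_action {X Y Γ : Type*} [TopologicalSpace X]
    [TopologicalSpace Y] [T2Space X] [Group Γ] [Finite Γ]
    (act : Γ → X → X)
    (act_one : ∀ z, act 1 z = z)
    (act_mul : ∀ γ δ z, act (γ * δ) z = act γ (act δ z))
    (act_cont : ∀ γ, Continuous (act γ))
    {q : X → Y} (hq : Continuous q) (hopen : IsOpenMap q) (hsurj : Function.Surjective q)
    (hfib : ∀ z z', q z' = q z ↔ ∃ γ, z' = act γ z)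
    (hfree : ∀ γ z, act γ z = z → γ = 1) :
    IsCoveringMap q := by
  letI : TopologicalSpace Γ := ⊥
  haveI : DiscreteTopology Γ := ⟨rfl⟩
  classical
  have act_inv : ∀ (γ : Γ) z, act γ⁻¹ (act γ z) = z := fun γ z => by
    rw [← act_mul, inv_mul_cancel, act_one]
  have act_inv' : ∀ (γ : Γ) z, act γ (act γ⁻¹ z) = z := fun γ z => by
    rw [← act_mul, mul_inv_cancel, act_one]
  apply IsFiberBundle.isCoveringMap (F := Γ)
  intro y
  obtain ⟨x, rfl⟩ := hsurj y
  -- separation data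
  have sep : ∀ γ : Γ, ∃ A B : Set X, IsOpen A ∧ x ∈ A ∧ IsOpen B ∧ act γ x ∈ B ∧
      (γ ≠ 1 → Disjoint A B) := by
    intro γ
    by_cases hγ : γ = 1
    · exact ⟨univ, univ, isOpen_univ, mem_univ _, isOpen_univ, mem_univ _,
        fun h => absurd hγ h⟩
    · have hne : x ≠ act γ x := fun h => hγ (hfree γ x h.symm)
      obtain ⟨u, v, hu, hv, hxu, hxv, huv⟩ := t2_separation hne
      exact ⟨u, v, hu, hxu, hv, hxv, fun _ => huv⟩
  choose A B hAo hxA hBo hxB hAB using sep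
  set U : Set X := ⋂ γ : Γ, (A γ ∩ (act γ) ⁻¹' (B γ)) with hU
  have hUo : IsOpen U := isOpen_iInter_of_finite fun γ =>
    (hAo γ).inter ((hBo γ).preimage (act_cont γ))
  have hxU : x ∈ U := mem_iInter.2 fun γ => ⟨hxA γ, hxB γ⟩
  have hdisj : ∀ (γ : Γ) (u), u ∈ U → ∀ v, v ∈ U → v = act γ u → γ = 1 := by
    intro γ u hu v hv hval
    by_contra hγ
    have h1 : v ∈ B γ := hval ▸ (mem_iInter.1 hu γ).2
    have h2 : v ∈ A γ := (mem_iInter.1 hv γ).1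
    exact Set.disjoint_left.1 (hAB γ hγ) h2 h1
  have huniq : ∀ z (γ δ : Γ), act γ⁻¹ z ∈ U → act δ⁻¹ z ∈ U → γ = δ := by
    intro z γ δ h1 h2
    have he : act δ⁻¹ z = act (δ⁻¹ * γ) (act γ⁻¹ z) := by
      rw [← act_mul, mul_inv_cancel_right]
    have := hdisj (δ⁻¹ * γ) _ h1 _ h2 he
    have : δ⁻¹ * γ = 1 := this
    rw [inv_mul_eq_one] at this
    exact this.symm
  set N : Set Y := q '' U with hN
  have hNo : IsOpen N := hopen U hUo
  have hyN : q x ∈ N := ⟨x, hxU, rfl⟩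
  -- q is injective on U
  have hinjU : Set.InjOn q U := by
    intro u hu v hv he
    obtain ⟨γ, hγ⟩ := (hfib u v).1 he.symm
    rw [hdisj γ u hu v hv hγ, act_one] at hγ
    exact hγ.symm
  -- homeomorphism U ≃ N
  have hbij : Function.Bijective (fun u : U => (⟨q u.1, mem_image_of_mem q u.2⟩ : N)) := by
    constructor
    · intro u v h
      exact Subtype.ext (hinjU u.2 v.2 (congrArg Subtype.val h))
    · rintro ⟨n, u, hu, hqu⟩
      exact ⟨⟨u, hu⟩, Subtype.ext hqu⟩
  have hropen : IsOpenMap (fun u : U => (⟨q u.1, mem_image_of_mem q u.2⟩ : N)) := by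
    intro s hs
    obtain ⟨O, hOo, rfl⟩ := isOpen_induced_iff.1 hs
    have : (fun u : U => (⟨q u.1, mem_image_of_mem q u.2⟩ : N)) '' (Subtype.val ⁻¹' O)
        = Subtype.val ⁻¹' (q '' (O ∩ U)) := by
      ext ⟨n, hn⟩
      constructor
      · rintro ⟨⟨u, hu⟩, hOu, hqu⟩
        exact ⟨u, ⟨hOu, hu⟩, congrArg Subtype.val hqu⟩
      · rintro ⟨z, ⟨hzO, hzU⟩, hqz⟩
        exact ⟨⟨z, hzU⟩, hzO, Subtype.ext hqz⟩
    rw [this]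
    exact (hopen _ (hOo.inter hUo)).preimage continuous_subtype_val
  let e : U ≃ₜ N := Equiv.toHomeomorphOfContinuousOpen (Equiv.ofBijective _ hbij)
    ((hq.comp continuous_subtype_val).subtype_mk _) hropen
  have he_apply : ∀ u : U, ((e u : N) : Y) = q u := fun u => rfl
  -- the section of q over N
  set s0 : Y → X := fun n => if h : n ∈ N then ((e.symm ⟨n, h⟩ : U) : X) else x with hs0def
  have hs0 : ∀ n (h : n ∈ N), s0 n = ((e.symm ⟨n, h⟩ : U) : X) := fun n h => by
    simp only [hs0def]
    exact dif_pos h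
  have hs0U : ∀ n (h : n ∈ N), s0 n ∈ U := fun n h => by
    rw [hs0 n h]; exact (e.symm ⟨n, h⟩).2
  have hqs0 : ∀ n (h : n ∈ N), q (s0 n) = n := by
    intro n h
    rw [hs0 n h]
    have := congrArg Subtype.val (e.apply_symm_apply ⟨n, h⟩)
    rwa [he_apply] at this
  have hs0cont : ContinuousOn s0 N := by
    rw [continuousOn_iff_continuous_restrict]
    have : N.domRestrict s0 = fun n : N => ((e.symm n : U) : X) := by
      funext n
      rw [Set.domRestrict_apply, hs0 n.1 n.2]
    rw [this]
    exact continuous_subtype_val.comp e.symm.continuous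
  -- the labelling function
  set gg : X → Γ := fun z => if h : ∃ γ : Γ, act γ⁻¹ z ∈ U then h.choose else 1 with hggdef
  have hgg : ∀ z (γ : Γ), act γ⁻¹ z ∈ U → gg z = γ := by
    intro z γ h
    have hex : ∃ δ : Γ, act δ⁻¹ z ∈ U := ⟨γ, h⟩
    have hch := hex.choose_spec
    simp only [hggdef, dif_pos hex]
    exact huniq z _ γ hch h
  have hsrc : ∀ z, q z ∈ N ↔ ∃ γ : Γ, act γ⁻¹ z ∈ U := by
    intro z
    constructor
    · rintro ⟨u, hu, hqu⟩
      obtain ⟨γ, hγ⟩ := (hfib u z).1 hqu.symm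
      exact ⟨γ, by rw [hγ, act_inv]; exact hu⟩
    · rintro ⟨γ, h⟩
      refine ⟨act γ⁻¹ z, h, ?_⟩
      exact (hfib z (act γ⁻¹ z)).2 ⟨γ⁻¹, rfl⟩
  have hq_act : ∀ (γ : Γ) z, q (act γ z) = q z := fun γ z =>
    (hfib z (act γ z)).2 ⟨γ, rfl⟩
  refine ⟨{ toFun := fun z => (q z, gg z)
            invFun := fun w => act w.2 (s0 w.1)
            source := q ⁻¹' N
            target := N ×ˢ (univ : Set Γ)
            map_source' := fun z hz => ⟨hz, mem_univ _⟩
            map_target' := ?_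
            left_inv' := ?_
            right_inv' := ?_
            open_source := hNo.preimage hq
            open_target := hNo.prod isOpen_univ
            continuousOn_toFun := ?_
            continuousOn_invFun := ?_
            baseSet := N
            open_baseSet := hNo
            source_eq := rfl
            target_eq := rfl
            proj_toFun := fun z hz => rfl }, hyN⟩
  · -- map_target'
    rintro ⟨n, γ⟩ ⟨hn, -⟩
    show q (act γ (s0 n)) ∈ N
    rw [hq_act, hqs0 n hn]
    exact hn
  · -- left_inv'
    intro z hz
    obtain ⟨γ, hγU⟩ := (hsrc z).1 hz
    show act (gg z) (s0 (q z)) = z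
    rw [hgg z γ hγU]
    have h1 : s0 (q z) = act γ⁻¹ z := by
      apply hinjU (hs0U _ hz) hγU
      rw [hqs0 _ hz, hq_act]
    rw [h1, act_inv']
  · -- right_inv'
    rintro ⟨n, γ⟩ ⟨hn, -⟩
    show (q (act γ (s0 n)), gg (act γ (s0 n))) = (n, γ)
    have h1 : q (act γ (s0 n)) = n := by rw [hq_act, hqs0 n hn]
    have h2 : gg (act γ (s0 n)) = γ := by
      apply hgg
      rw [act_inv]
      exact hs0U n hn
    rw [h1, h2]
  · -- continuousOn_toFun
    intro z hz
    apply ContinuousAt.continuousWithinAt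
    apply hq.continuousAt.prodMk
    obtain ⟨γ, hγU⟩ := (hsrc z).1 hz
    have hOo : IsOpen ((act γ⁻¹) ⁻¹' U) := hUo.preimage (act_cont γ⁻¹)
    have hev : (fun _ : X => γ) =ᶠ[𝓝 z] gg :=
      Filter.eventuallyEq_of_mem (hOo.mem_nhds hγU) fun w hw => (hgg w γ hw).symm
    exact continuousAt_const.congr hev
  · -- continuousOn_invFun
    intro w hw
    have cont1 : ContinuousOn (fun v : Y × Γ => act w.2 (s0 v.1)) (N ×ˢ (univ : Set Γ)) := by
      apply (act_cont w.2).comp_continuousOn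
      exact hs0cont.comp continuousOn_fst fun v hv => hv.1
    have hmem : {v : Y × Γ | v.2 = w.2} ∈ 𝓝 w :=
      (((isOpen_discrete ({w.2} : Set Γ)).preimage continuous_snd).mem_nhds rfl)
    have hev : (fun v : Y × Γ => act v.2 (s0 v.1)) =ᶠ[𝓝[N ×ˢ (univ : Set Γ)] w]
        (fun v : Y × Γ => act w.2 (s0 v.1)) :=
      (Filter.eventuallyEq_of_mem hmem fun v hv => by
        simp only [Set.mem_setOf_eq] at hv; rw [hv]).filter_mono nhdsWithin_le_nhds
    exact (cont1 w hw).congr_of_eventuallyEq hev rfl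

/-- The map `Hom(π, H) → Hom(π, G)` induced by a group homomorphism `p : H → G`:
`(a₁,…,a_{2g}) ↦ (p(a₁),…,p(a_{2g}))`. -/
def inducedRepMap (g : ℕ) {H G : Type*} [Group H] [Group G] (p : H →* G)
    (a : {a : Fin (2 * g) → H // surfaceRel g a}) :
    {b : Fin (2 * g) → G // surfaceRel g b} :=
  ⟨fun i => p (a.1 i), by
    have h := congrArg p a.2
    unfold surfaceRel
    simp only [map_list_prod, List.map_map, Function.comp_def, map_mul, map_inv,
      map_one] at h ⊢
    exact h⟩

/-- Let `p : H → G` be a continuous surjective homomorphism of Hausdorff topological groups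
which is a covering map, with finite central kernel `C`. For `g ≥ 2`, the corestriction onto
its range of the induced map `Φ : Hom(π, H) → Hom(π, G)` is a covering map, and its fibers are
exactly the orbits of the free coordinatewise translation action of `C^{2g}` on `Hom(π, H)`. -/
theorem inducedRepMap_isCoveringMap_and_fibers
    {H G : Type*} [Group H] [TopologicalSpace H] [IsTopologicalGroup H] [T2Space H]
    [Group G] [TopologicalSpace G] [IsTopologicalGroup G] [T2Space G]
    (p : H →* G) (hcont : Continuous p) (hsurj : Function.Surjective p)
    (hcov : IsCoveringMap p)
    (hfin : (p.ker : Set H).Finite) (hcentral : p.ker ≤ Subgroup.center H)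
    (g : ℕ) (hg : 2 ≤ g) :
    IsCoveringMap (Set.rangeFactorization (inducedRepMap g p)) ∧
    (∀ a b : {a : Fin (2 * g) → H // surfaceRel g a},
      inducedRepMap g p a = inducedRepMap g p b ↔
        ∃ c : Fin (2 * g) → H, (∀ i, c i ∈ p.ker) ∧ ∀ i, b.1 i = c i * a.1 i) ∧
    (∀ c : Fin (2 * g) → H, (∀ i, c i ∈ p.ker) →
      ∀ a : {a : Fin (2 * g) → H // surfaceRel g a},
        (∀ i, c i * a.1 i = a.1 i) → ∀ i, c i = 1) := by
  -- central commuting property of kernel elements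
  have hcomm : ∀ z : H, z ∈ p.ker → ∀ x : H, z * x = x * z := fun z hz x =>
    ((Subgroup.mem_center_iff.1 (hcentral hz)) x).symm
  -- Part 3 : freeness
  have part3 : ∀ c : Fin (2 * g) → H, (∀ i, c i ∈ p.ker) →
      ∀ a : {a : Fin (2 * g) → H // surfaceRel g a},
        (∀ i, c i * a.1 i = a.1 i) → ∀ i, c i = 1 := by
    intro c _ a h i
    exact mul_eq_right.1 (h i)
  -- Part 2 : fibers
  have part2 : ∀ a b : {a : Fin (2 * g) → H // surfaceRel g a},
      inducedRepMap g p a = inducedRepMap g p b ↔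
        ∃ c : Fin (2 * g) → H, (∀ i, c i ∈ p.ker) ∧ ∀ i, b.1 i = c i * a.1 i := by
    intro a b
    constructor
    · intro h
      have hpi : ∀ i, p (a.1 i) = p (b.1 i) := fun i =>
        congrFun (congrArg Subtype.val h) i
      refine ⟨fun i => b.1 i * (a.1 i)⁻¹, fun i => ?_, fun i => (inv_mul_cancel_right _ _).symm⟩
      rw [MonoidHom.mem_ker, map_mul, map_inv, ← hpi i, mul_inv_cancel]
    · rintro ⟨c, hker, hb⟩
      apply Subtype.ext
      funext i
      show p (a.1 i) = p (b.1 i)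
      rw [hb i, map_mul, MonoidHom.mem_ker.1 (hker i), one_mul]
  refine ⟨?_, part2, part3⟩
  -- Part 1 : covering map
  haveI : Finite ↥p.ker := hfin.to_subtype
  set X := {a : Fin (2 * g) → H // surfaceRel g a} with hX
  set Φ := inducedRepMap g p with hΦ
  -- the action
  set act : (Fin (2 * g) → ↥p.ker) → X → X := fun c a =>
    ⟨fun i => (c i : H) * a.1 i,
      surfaceRel_central_mul g _ _ (fun i => hcomm _ (c i).2) a.2⟩ with hact
  have hΦcont : Continuous Φ :=
    Continuous.subtype_mk
      (continuous_pi fun i => hcont.comp ((continuous_apply i).comp continuous_subtype_val)) _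
  -- openness of the corestriction
  have hopen : IsOpenMap (Set.rangeFactorization Φ) := by
    intro O hOopen
    obtain ⟨O', hO'o, rfl⟩ := isOpen_induced_iff.1 hOopen
    set W : Set (Fin (2 * g) → H) :=
      ⋃ c : Fin (2 * g) → ↥p.ker, (fun z : Fin (2 * g) → H => fun i => (c i : H) * z i) '' O'
      with hW
    have hWo : IsOpen W := by
      apply isOpen_iUnion
      intro c
      have : IsOpenMap (fun z : Fin (2 * g) → H => fun i => (c i : H) * z i) :=
        IsOpenMap.piMap (fun i => (Homeomorph.mulLeft ((c i : H))).isOpenMap)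
          (Filter.Eventually.of_forall fun i => (Homeomorph.mulLeft ((c i : H))).surjective)
      exact this _ hO'o
    set S : Set (Fin (2 * g) → G) := (fun z : Fin (2 * g) → H => fun i => p (z i)) '' W
      with hS
    have hSo : IsOpen S := by
      have : IsOpenMap (fun z : Fin (2 * g) → H => fun i => p (z i)) :=
        IsOpenMap.piMap (fun _ => hcov.isOpenMap)
          (Filter.Eventually.of_forall fun _ => hsurj)
      exact this _ hWo
    have hkey : Set.rangeFactorization Φ '' (Subtype.val ⁻¹' O')
        = (fun y : ↥(Set.range Φ) => (y.1.1 : Fin (2 * g) → G)) ⁻¹' S := by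
      ext y
      constructor
      · rintro ⟨a, ha, rfl⟩
        refine ⟨a.1, ?_, rfl⟩
        exact Set.mem_iUnion.2 ⟨1, a.1, ha, funext fun i => by simp⟩
      · rintro ⟨w, hwW, hws⟩
        obtain ⟨a0, ha0⟩ := y.2
        obtain ⟨c, z, hzO, hzw⟩ := Set.mem_iUnion.1 hwW
        -- p (z i) = y.1.1 i
        have hpz : ∀ i, p (z i) = y.1.1 i := by
          intro i
          have h1 : p (w i) = y.1.1 i := congrFun hws i
          rw [← hzw] at h1
          rwa [map_mul, MonoidHom.mem_ker.1 (c i).2, one_mul] at h1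
        have hpa0 : ∀ i, p (a0.1 i) = y.1.1 i := fun i =>
          congrFun (congrArg Subtype.val ha0) i
        -- z differs from a0 by a kernel element, hence satisfies the relation
        have hzrel : surfaceRel g z := by
          have hz : z = fun i => (z i * (a0.1 i)⁻¹) * a0.1 i :=
            funext fun i => (inv_mul_cancel_right _ _).symm
          rw [hz]
          apply surfaceRel_central_mul g _ _ _ a0.2
          intro i
          apply hcomm
          rw [MonoidHom.mem_ker, map_mul, map_inv, hpz i, ← hpa0 i, mul_inv_cancel]
        refine ⟨⟨z, hzrel⟩, hzO, ?_⟩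
        apply Subtype.ext
        apply Subtype.ext
        funext i
        exact hpz i
    rw [hkey]
    exact hSo.preimage (continuous_subtype_val.comp continuous_subtype_val)
  apply isCoveringMap_of_finite_free_action act
  · intro a
    apply Subtype.ext
    funext i
    show ((1 : ↥p.ker) : H) * a.1 i = a.1 i
    simp
  · intro c d a
    apply Subtype.ext
    funext i
    show (((c * d) i : ↥p.ker) : H) * a.1 i = (c i : H) * ((d i : H) * a.1 i)
    simp [mul_assoc]
  · intro c
    apply Continuous.subtype_mk
    apply continuous_pi
    intro i
    exact continuous_const.mul ((continuous_apply i).comp continuous_subtype_val)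
  · exact hΦcont.subtype_mk _
  · exact hopen
  · exact Set.rangeFactorization_surjective
  · intro a b
    constructor
    · intro h
      have h' : Φ a = Φ b := (congrArg Subtype.val h).symm
      obtain ⟨c, hker, hb⟩ := (part2 a b).1 h'
      exact ⟨fun i => ⟨c i, hker i⟩, Subtype.ext (funext fun i => hb i)⟩
    · rintro ⟨c, rfl⟩
      apply Subtype.ext
      show Φ (act c a) = Φ a
      exact ((part2 a (act c a)).2 ⟨fun i => c i, fun i => (c i).2, fun i => rfl⟩).symm
  · intro c a h
    have h' : ∀ i, (c i : H) * a.1 i = a.1 i := fun i =>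
      congrFun (congrArg Subtype.val h) i
    funext i
    exact Subtype.ext (mul_eq_right.1 (h' i))
end

section
/- Let V be a real inner product space, let S be a finite multiset of vectors in V that is closed under negation (i.e., the multiset obtained by negating every element of S equals S), and let β ∈ V be nonzero. Then 2 · (number of elements α of S, counted with multiplicity, satisfying ⟨α, β⟩ < ⟨β, β⟩) ≥ (total number of elements of S counted with multiplicity). -/
open scoped RealInnerProductSpace

/-- Let `V` be a real inner product space, `S` a finite multiset of vectors closed under
negation, and `β ≠ 0`. Then at least half of the elements of `S` (with multiplicity) satisfy
`⟨α, β⟩ < ⟨β, β⟩`: twice the number of such elements is at least the total size of `S`. -/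
theorem two_mul_card_inner_lt_ge_card
    {V : Type*} [NormedAddCommGroup V] [InnerProductSpace ℝ V]
    (S : Multiset V) (hS : S.map (fun v => -v) = S) {β : V} (hβ : β ≠ 0) :
    S.card ≤ 2 * Multiset.card (S.filter fun α => ⟪α, β⟫ < ⟪β, β⟫) := by
  classical
  have hβ2 : (0:ℝ) < ⟪β, β⟫ := by
    rw [real_inner_self_eq_norm_sq]
    have := norm_pos_iff.mpr hβ
    positivity
  have key : (S.filter (fun α => ¬ ⟪α, β⟫ < ⟪β, β⟫)).map (fun v => -v)
      ≤ S.filter (fun α => ⟪α, β⟫ < ⟪β, β⟫) := by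
    rw [Multiset.le_filter]
    constructor
    · calc (S.filter (fun α => ¬ ⟪α, β⟫ < ⟪β, β⟫)).map (fun v => -v)
          ≤ S.map (fun v => -v) := Multiset.map_le_map (Multiset.filter_le _ _)
        _ = S := hS
    · intro a ha
      obtain ⟨b, hb, rfl⟩ := Multiset.mem_map.mp ha
      have hbp := (Multiset.mem_filter.mp hb).2
      rw [not_lt] at hbp
      rw [inner_neg_left]
      linarith
  have hc := Multiset.card_le_card key
  rw [Multiset.card_map] at hc
  have hsplit : S.card = (S.filter fun α => ⟪α, β⟫ < ⟪β, β⟫).card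
      + (S.filter fun α => ¬ ⟪α, β⟫ < ⟪β, β⟫).card := by
    rw [← Multiset.card_add, Multiset.filter_add_not]
  omega
end

section
/- Fix g ≥ 2. In the formal power series ring ℚ[[t]], the following identity holds: Σ_{p=0}^{2g} Σ_{m ≥ g−1, m ≡ p (mod 2)} C(2g, p) · t^{p+2m} = (1/2)·[ t^{2g−2}·(1+t)^{2g}·(1−t²)^{−1} + (−1)^{g−1}·t^{2g−2}·(1−t)^{2g}·(1+t²)^{−1} ]. -/
open PowerSeries

lemma tps_inner_sum (g p n : ℕ) (c : ℚ) :
    (∑ m ∈ Finset.range (n + 1),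
        if g - 1 ≤ m ∧ m % 2 = p % 2 ∧ p + 2 * m = n then c else 0) =
      if p ≤ n ∧ (n - p) % 2 = 0 ∧ 2 * (g - 1) ≤ n - p ∧ ((n - p) / 2) % 2 = p % 2 then c
      else 0 := by
  by_cases hQ : p ≤ n ∧ (n - p) % 2 = 0 ∧ 2 * (g - 1) ≤ n - p ∧ ((n - p) / 2) % 2 = p % 2
  · rw [if_pos hQ, Finset.sum_eq_single_of_mem ((n - p) / 2)
      (Finset.mem_range.mpr (by omega))]
    · rw [if_pos (by omega)]
    · intro b _ hb
      rw [if_neg (by omega)]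
  · rw [if_neg hQ]
    apply Finset.sum_eq_zero
    intro m hm
    rw [if_neg]
    intro h
    exact hQ (by omega)

lemma tps_key1 (g : ℕ) (hg : 2 ≤ g) :
    (PowerSeries.mk fun d : ℕ =>
        ∑ p ∈ Finset.range (2 * g + 1), ∑ m ∈ Finset.range (d + 1),
          if g - 1 ≤ m ∧ m % 2 = p % 2 ∧ p + 2 * m = d then ((2 * g).choose p : ℚ) else 0)
      * (1 - X ^ 4) =
    ∑ p ∈ Finset.range (2 * g + 1),
      PowerSeries.C (R := ℚ) ((2 * g).choose p : ℚ) *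
        X ^ (p + 2 * (if p % 2 = (g - 1) % 2 then g - 1 else g)) := by
  ext n
  rw [mul_sub, mul_one, map_sub, PowerSeries.coeff_mul_X_pow', map_sum, PowerSeries.coeff_mk]
  simp only [PowerSeries.coeff_mk, PowerSeries.coeff_C_mul, PowerSeries.coeff_X_pow,
    mul_ite, mul_one, mul_zero]
  have hrw : ∀ d, (∑ p ∈ Finset.range (2 * g + 1), ∑ m ∈ Finset.range (d + 1),
      if g - 1 ≤ m ∧ m % 2 = p % 2 ∧ p + 2 * m = d then ((2 * g).choose p : ℚ) else 0)
      = ∑ p ∈ Finset.range (2 * g + 1),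
        if p ≤ d ∧ (d - p) % 2 = 0 ∧ 2 * (g - 1) ≤ d - p ∧ ((d - p) / 2) % 2 = p % 2
        then ((2 * g).choose p : ℚ) else 0 :=
    fun d => Finset.sum_congr rfl fun p _ => tps_inner_sum g p d _
  rw [hrw n]
  have h2 : (if 4 ≤ n then (∑ p ∈ Finset.range (2 * g + 1), ∑ m ∈ Finset.range ((n-4) + 1),
      if g - 1 ≤ m ∧ m % 2 = p % 2 ∧ p + 2 * m = (n-4) then ((2 * g).choose p : ℚ) else 0) else 0)
      = ∑ p ∈ Finset.range (2 * g + 1),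
        if 4 ≤ n ∧ (p ≤ n-4 ∧ (n-4 - p) % 2 = 0 ∧ 2 * (g - 1) ≤ n-4 - p ∧ ((n-4 - p) / 2) % 2 = p % 2)
        then ((2 * g).choose p : ℚ) else 0 := by
    split_ifs with h
    · rw [hrw (n-4)]
      exact Finset.sum_congr rfl fun p _ => by simp [h]
    · exact (Finset.sum_eq_zero fun p _ => by simp [h]).symm
  rw [h2, ← Finset.sum_sub_distrib]
  apply Finset.sum_congr rfl
  intro p _
  split_ifs <;> first | (exfalso; omega) | simp

lemma tps_half : (PowerSeries.C (R := ℚ) (1/2)) * 2 = 1 := by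
  rw [show (2 : ℚ⟦X⟧) = PowerSeries.C (R := ℚ) 2 from (map_ofNat (PowerSeries.C (R := ℚ)) 2).symm, ← map_mul]
  norm_num

lemma tps_expand_add (g : ℕ) :
    (1 + X : ℚ⟦X⟧) ^ (2*g) =
      ∑ p ∈ Finset.range (2*g+1), PowerSeries.C (R := ℚ) ((2*g).choose p : ℚ) * X ^ p := by
  rw [add_comm, add_pow]
  exact Finset.sum_congr rfl fun p _ => by
    rw [one_pow, mul_one, ← map_natCast (PowerSeries.C (R := ℚ)) ((2*g).choose p)]
    ring

lemma tps_expand_sub (g : ℕ) :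
    (1 - X : ℚ⟦X⟧) ^ (2*g) =
      ∑ p ∈ Finset.range (2*g+1), (-1)^p * PowerSeries.C (R := ℚ) ((2*g).choose p : ℚ) * X ^ p := by
  have : (1 - X : ℚ⟦X⟧) = (-X) + 1 := by ring
  rw [this, add_pow]
  exact Finset.sum_congr rfl fun p _ => by
    rw [one_pow, mul_one, neg_pow, ← map_natCast (PowerSeries.C (R := ℚ)) ((2*g).choose p)]
    ring

lemma tps_key2 (g : ℕ) (hg : 2 ≤ g) :
    (PowerSeries.C (R := ℚ) (1 / 2) *
        ((X : ℚ⟦X⟧) ^ (2 * g - 2) * (1 + X) ^ (2 * g) * (1 - X ^ 2)⁻¹ +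
          (-1) ^ (g - 1) * X ^ (2 * g - 2) * (1 - X) ^ (2 * g) * (1 + X ^ 2)⁻¹))
      * ((1 - X^2) * (1 + X^2)) =
    ∑ p ∈ Finset.range (2 * g + 1),
      PowerSeries.C (R := ℚ) ((2 * g).choose p : ℚ) *
        X ^ (p + 2 * (if p % 2 = (g - 1) % 2 then g - 1 else g)) := by
  have i1 : ((1 - X^2 : ℚ⟦X⟧))⁻¹ * (1 - X^2) = 1 :=
    PowerSeries.inv_mul_cancel _ (by simp)
  have i2 : ((1 + X^2 : ℚ⟦X⟧))⁻¹ * (1 + X^2) = 1 :=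
    PowerSeries.inv_mul_cancel _ (by simp)
  calc (PowerSeries.C (R := ℚ) (1 / 2) *
        ((X : ℚ⟦X⟧) ^ (2 * g - 2) * (1 + X) ^ (2 * g) * (1 - X ^ 2)⁻¹ +
          (-1) ^ (g - 1) * X ^ (2 * g - 2) * (1 - X) ^ (2 * g) * (1 + X ^ 2)⁻¹))
      * ((1 - X^2) * (1 + X^2))
      = PowerSeries.C (R := ℚ) (1 / 2) *
        ((X : ℚ⟦X⟧) ^ (2 * g - 2) * (1 + X) ^ (2 * g) * ((1 - X ^ 2)⁻¹ * (1 - X^2)) * (1 + X^2) +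
          (-1) ^ (g - 1) * X ^ (2 * g - 2) * (1 - X) ^ (2 * g) * ((1 + X ^ 2)⁻¹ * (1 + X^2)) * (1 - X^2)) := by
        ring
    _ = PowerSeries.C (R := ℚ) (1 / 2) *
        ((X : ℚ⟦X⟧) ^ (2 * g - 2) * (1 + X) ^ (2 * g) * (1 + X^2) +
          (-1) ^ (g - 1) * X ^ (2 * g - 2) * (1 - X) ^ (2 * g) * (1 - X^2)) := by
        rw [i1, i2]; ring
    _ = ∑ p ∈ Finset.range (2 * g + 1),
        PowerSeries.C (R := ℚ) (1 / 2) *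
          ((X : ℚ⟦X⟧) ^ (2 * g - 2) * (PowerSeries.C (R := ℚ) ((2*g).choose p : ℚ) * X ^ p) * (1 + X^2) +
            (-1) ^ (g - 1) * X ^ (2 * g - 2) * ((-1)^p * PowerSeries.C (R := ℚ) ((2*g).choose p : ℚ) * X ^ p) * (1 - X^2)) := by
        rw [tps_expand_add, tps_expand_sub]
        simp only [Finset.mul_sum, Finset.sum_mul]
        rw [mul_add, Finset.mul_sum, Finset.mul_sum, ← Finset.sum_add_distrib]
        exact Finset.sum_congr rfl fun p _ => by ring
    _ = _ := by
        apply Finset.sum_congr rfl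
        intro p _
        by_cases hpar : p % 2 = (g - 1) % 2
        · rw [if_pos hpar]
          have hs : ((-1 : ℚ⟦X⟧)) ^ (g-1) * (-1)^p = 1 := by
            rw [← pow_add]
            exact Even.neg_one_pow (Nat.even_iff.mpr (by omega))
          rw [show p + 2 * (g - 1) = (2*g-2) + p from by omega, pow_add]
          linear_combination (X^(2*g-2) * (PowerSeries.C (R := ℚ) ((2*g).choose p : ℚ)) * X^p * (1 - X^2)) * (PowerSeries.C (R := ℚ) (1/2)) * hs + (X^(2*g-2) * (PowerSeries.C (R := ℚ) ((2*g).choose p : ℚ)) * X^p) * tps_half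
        · rw [if_neg hpar]
          have hs : ((-1 : ℚ⟦X⟧)) ^ (g-1) * (-1)^p = -1 := by
            rw [← pow_add]
            exact Odd.neg_one_pow (Nat.odd_iff.mpr (by omega))
          rw [show p + 2 * g = (2*g-2) + p + 2 from by omega, pow_add, pow_add]
          linear_combination (X^(2*g-2) * (PowerSeries.C (R := ℚ) ((2*g).choose p : ℚ)) * X^p * (1 - X^2)) * (PowerSeries.C (R := ℚ) (1/2)) * hs + (X^(2*g-2) * (PowerSeries.C (R := ℚ) ((2*g).choose p : ℚ)) * X^p * X^2) * tps_half

/-- The Poincaré series of `[H*(Jac) ⊗ u^{g−1}ℂ[u]]^{ℤ/2}`: the formal power series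
`Σ_{p=0}^{2g} Σ_{m ≥ g−1, m ≡ p (mod 2)} C(2g, p) t^{p+2m}` equals
`(1/2)·[t^{2g−2}(1+t)^{2g}(1−t²)⁻¹ + (−1)^{g−1} t^{2g−2}(1−t)^{2g}(1+t²)⁻¹]` in `ℚ[[t]]`. -/
theorem truncated_poincare_series (g : ℕ) (hg : 2 ≤ g) :
    (PowerSeries.mk fun d : ℕ =>
        ∑ p ∈ Finset.range (2 * g + 1), ∑ m ∈ Finset.range (d + 1),
          if g - 1 ≤ m ∧ m % 2 = p % 2 ∧ p + 2 * m = d then ((2 * g).choose p : ℚ) else 0) =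
      PowerSeries.C (R := ℚ) (1 / 2) *
        ((X : ℚ⟦X⟧) ^ (2 * g - 2) * (1 + X) ^ (2 * g) * (1 - X ^ 2)⁻¹ +
          (-1) ^ (g - 1) * X ^ (2 * g - 2) * (1 - X) ^ (2 * g) * (1 + X ^ 2)⁻¹) := by
  have hne : ((1 - X^2 : ℚ⟦X⟧) * (1 + X^2)) ≠ 0 := by
    intro h
    have := congrArg (PowerSeries.constantCoeff (R := ℚ)) h
    simp at this
  apply mul_right_cancel₀ hne
  rw [tps_key2 g hg, show ((1 - X^2 : ℚ⟦X⟧) * (1 + X^2)) = 1 - X^4 from by ring]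
  exact tps_key1 g hg
end

section
/- Let K be a field of characteristic zero, let g ≥ 1, let V = K^{2g} with standard basis e₁,…,e_{2g}, and let ω = Σ_{i=1}^{g} e_i ∧ e_{g+i} in the exterior algebra ⋀ V. Then for every 0 ≤ k ≤ g, the linear map from the k-th exterior power ⋀^k V to ⋀^{2g−k} V given by x ↦ ω^{g−k} ∧ x is a linear isomorphism. -/
open ExteriorAlgebra

namespace HL

variable (K : Type*) [Field K] (g : ℕ)

/-- the standard basis vectors, indexed by ℕ with junk value 0 out of range -/
noncomputable def u (j : ℕ) : Fin (2*g) → K :=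
  if h : j < 2*g then Pi.single (⟨j, h⟩ : Fin (2*g)) 1 else 0

/-- index set of the first `m` hyperbolic pairs -/
def S (m : ℕ) : Set ℕ := {j | j < m ∨ (g ≤ j ∧ j < g + m)}

noncomputable def U (m : ℕ) : Submodule K (Fin (2*g) → K) :=
  Submodule.span K (u K g '' S g m)

noncomputable def W (m : ℕ) : Submodule K (ExteriorAlgebra K (Fin (2*g) → K)) :=
  Submodule.map (ι K : (Fin (2*g) → K) →ₗ[K] _) (U K g m)

noncomputable def E (m k : ℕ) : Submodule K (ExteriorAlgebra K (Fin (2*g) → K)) :=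
  W K g m ^ k

noncomputable def ω (m : ℕ) : ExteriorAlgebra K (Fin (2*g) → K) :=
  ∑ i ∈ Finset.range m, ι K (u K g i) * ι K (u K g (g + i))

variable {K g}

lemma iswap (v w : Fin (2*g) → K) : ι K v * ι K w = -(ι K w * ι K v) :=
  eq_neg_of_add_eq_zero_left (ι_add_mul_swap v w)

lemma central2 (v w : Fin (2*g) → K) (x : ExteriorAlgebra K (Fin (2*g) → K)) :
    Commute (ι K v * ι K w) x := by
  unfold Commute SemiconjBy
  induction x using CliffordAlgebra.induction with
  | algebraMap r => rw [Algebra.commutes]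
  | ι m =>
      show (ι K v * ι K w) * ι K m = ι K m * (ι K v * ι K w)
      rw [mul_assoc, iswap w m, mul_neg, ← mul_assoc, iswap v m, neg_mul, neg_neg, mul_assoc]
  | mul x y hx hy => rw [← mul_assoc, hx, mul_assoc, hy, ← mul_assoc]
  | add x y hx hy => rw [mul_add, hx, hy, add_mul]

lemma ω_commute (m : ℕ) (x : ExteriorAlgebra K (Fin (2*g) → K)) : Commute (ω K g m) x :=
  Commute.sum_left _ _ _ fun i _ => central2 _ _ x

lemma ι_mem_W {v : Fin (2*g) → K} {m : ℕ} (hv : v ∈ U K g m) : ι K v ∈ W K g m :=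
  Submodule.mem_map_of_mem hv

lemma mul_mem_E {m i j : ℕ} {x y : ExteriorAlgebra K (Fin (2*g) → K)}
    (hx : x ∈ E K g m i) (hy : y ∈ E K g m j) : x * y ∈ E K g m (i+j) := by
  rw [E, pow_add]; exact Submodule.mul_mem_mul hx hy

lemma ι_mul_mem_E {v : Fin (2*g) → K} {m : ℕ} (hv : v ∈ U K g m) {j : ℕ}
    {y : ExteriorAlgebra K (Fin (2*g) → K)} (hy : y ∈ E K g m j) :
    ι K v * y ∈ E K g m (j+1) := by
  rw [E, pow_succ']; exact Submodule.mul_mem_mul (ι_mem_W hv) hy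

lemma one_mem_E (m : ℕ) : (1 : ExteriorAlgebra K (Fin (2*g) → K)) ∈ E K g m 0 := by
  rw [E, pow_zero, Submodule.one_eq_span]; exact Submodule.subset_span rfl

lemma u_mem_U {m j : ℕ} (hj : j ∈ S g m) : u K g j ∈ U K g m :=
  Submodule.subset_span ⟨j, hj, rfl⟩

lemma ω_mem_E (m : ℕ) : ω K g m ∈ E K g m 2 := by
  refine Submodule.sum_mem _ fun i hi => ?_
  have hi' := Finset.mem_range.mp hi
  have h1 : (i : ℕ) ∈ S g m := Or.inl hi'
  have h2 : (g + i : ℕ) ∈ S g m := Or.inr ⟨Nat.le_add_right _ _, by omega⟩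
  have : ι K (u K g i) * ι K (u K g (g+i)) ∈ E K g m (1+1) :=
    mul_mem_E (by rw [E, pow_one]; exact ι_mem_W (u_mem_U h1))
      (by rw [E, pow_one]; exact ι_mem_W (u_mem_U h2))
  exact this

lemma ω_pow_mul_mem_E {m n j : ℕ} {x : ExteriorAlgebra K (Fin (2*g) → K)}
    (hx : x ∈ E K g m j) : ω K g m ^ n * x ∈ E K g m (2*n + j) := by
  induction n with
  | zero => simpa using hx
  | succ n ih =>
      have : ω K g m ^ (n+1) * x = ω K g m * (ω K g m ^ n * x) := by
        rw [← mul_assoc, pow_succ, (ω_commute m _).eq]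
      rw [this]
      have := mul_mem_E (ω_mem_E m) ih
      convert this using 2
      omega

/-- contraction kills everything built from vectors killed by `d` -/
lemma contract_eq_zero {m : ℕ} (d : Module.Dual K (Fin (2*g) → K))
    (hd : ∀ v ∈ U K g m, d v = 0) {k : ℕ} {x : ExteriorAlgebra K (Fin (2*g) → K)}
    (hx : x ∈ E K g m k) : CliffordAlgebra.contractLeft d x = 0 := by
  rw [E] at hx
  refine Submodule.pow_induction_on_left (M := W K g m)
    (C := fun y => CliffordAlgebra.contractLeft d y = 0) ?_ ?_ ?_ hx
  · intro r
    exact CliffordAlgebra.contractLeft_algebraMap (Q := (0 : QuadraticForm K (Fin (2*g) → K))) d r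
  · intro x y hx hy; rw [map_add, hx, hy, add_zero]
  · rintro _ ⟨v, hv, rfl⟩ y hy
    rw [CliffordAlgebra.contractLeft_ι_mul, hy, hd v hv, zero_smul, mul_zero, sub_zero]

lemma isq (v : Fin (2*g) → K) : ι K v * ι K v = 0 := ι_sq_zero v

section Decomp

variable (K g) in
/-- decomposition of an element of `E (m+1) k` into components over `E m`. -/
def HasDec (m k : ℕ) (x : ExteriorAlgebra K (Fin (2*g) → K)) : Prop :=
  ∃ x0 x1 x2 x3 : ExteriorAlgebra K (Fin (2*g) → K),
    x0 ∈ E K g m k ∧ x1 ∈ E K g m (k-1) ∧ x2 ∈ E K g m (k-1) ∧ x3 ∈ E K g m (k-2) ∧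
    (k = 0 → x1 = 0 ∧ x2 = 0) ∧ (k ≤ 1 → x3 = 0) ∧
    x = x0 + ι K (u K g m) * x1 + ι K (u K g (g+m)) * x2
        + ι K (u K g m) * ι K (u K g (g+m)) * x3

lemma hasDec_add {m k : ℕ} {x y : ExteriorAlgebra K (Fin (2*g) → K)}
    (hx : HasDec K g m k x) (hy : HasDec K g m k y) : HasDec K g m k (x + y) := by
  obtain ⟨x0, x1, x2, x3, h0, h1, h2, h3, hz1, hz2, rfl⟩ := hx
  obtain ⟨y0, y1, y2, y3, g0, g1, g2, g3, gz1, gz2, rfl⟩ := hy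
  refine ⟨x0+y0, x1+y1, x2+y2, x3+y3, add_mem h0 g0, add_mem h1 g1, add_mem h2 g2,
    add_mem h3 g3, ?_, ?_, by rw [mul_add, mul_add, mul_add]; abel⟩
  · intro h; rw [(hz1 h).1, (gz1 h).1, (hz1 h).2, (gz1 h).2, add_zero]; exact ⟨rfl, rfl⟩
  · intro h; rw [hz2 h, gz2 h, add_zero]

lemma hasDec_smul {m k : ℕ} (c : K) {x : ExteriorAlgebra K (Fin (2*g) → K)}
    (hx : HasDec K g m k x) : HasDec K g m k (c • x) := by
  obtain ⟨x0, x1, x2, x3, h0, h1, h2, h3, hz1, hz2, rfl⟩ := hx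
  refine ⟨c•x0, c•x1, c•x2, c•x3, Submodule.smul_mem _ _ h0, Submodule.smul_mem _ _ h1,
    Submodule.smul_mem _ _ h2, Submodule.smul_mem _ _ h3, ?_, ?_, ?_⟩
  · intro h; rw [(hz1 h).1, (hz1 h).2, smul_zero]; exact ⟨rfl, rfl⟩
  · intro h; rw [hz2 h, smul_zero]
  · rw [smul_add, smul_add, smul_add, mul_smul_comm, mul_smul_comm, mul_smul_comm]

lemma ι_mul_shift {m : ℕ} {v : Fin (2*g) → K} (hv : v ∈ U K g m) {j : ℕ}
    {y : ExteriorAlgebra K (Fin (2*g) → K)} (hy : y ∈ E K g m (j-1)) (h0 : j = 0 → y = 0) :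
    ι K v * y ∈ E K g m j := by
  rcases Nat.eq_zero_or_pos j with h | h
  · rw [h0 h, mul_zero]; exact zero_mem _
  · have := ι_mul_mem_E hv hy
    rwa [Nat.sub_add_cancel h] at this

lemma hasDec_ι_mul {m k : ℕ} {v : Fin (2*g) → K} (hv : v ∈ U K g m)
    {y : ExteriorAlgebra K (Fin (2*g) → K)} (hy : HasDec K g m k y) :
    HasDec K g m (k+1) (ι K v * y) := by
  obtain ⟨y0, y1, y2, y3, h0, h1, h2, h3, hz1, hz2, rfl⟩ := hy
  have e21 : k + 1 - 1 = k := by omega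
  have e22 : k + 1 - 2 = k - 1 := by omega
  have e23 : k - 1 - 1 = k - 2 := by omega
  refine ⟨ι K v * y0, -(ι K v * y1), -(ι K v * y2), ι K v * y3,
    by simpa using ι_mul_mem_E hv h0,
    by rw [e21]; exact neg_mem (ι_mul_shift hv h1 (fun h => (hz1 h).1)),
    by rw [e21]; exact neg_mem (ι_mul_shift hv h2 (fun h => (hz1 h).2)),
    by rw [e22]; exact ι_mul_shift hv (by rw [e23]; exact h3) (fun h => hz2 (by omega)),
    fun h => absurd h (by omega), fun h => by rw [hz2 (by omega), mul_zero], ?_⟩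
  have hab : ∀ (w : Fin (2*g) → K) (z : ExteriorAlgebra K (Fin (2*g) → K)),
      ι K v * (ι K w * z) = ι K w * -(ι K v * z) := by
    intro w z
    rw [← mul_assoc, iswap v w, neg_mul, mul_assoc, mul_neg]
  have habab : ι K v * (ι K (u K g m) * ι K (u K g (g+m)) * y3)
      = ι K (u K g m) * ι K (u K g (g+m)) * (ι K v * y3) := by
    rw [← mul_assoc, ← (central2 (u K g m) (u K g (g+m)) (ι K v)).eq, mul_assoc]
  rw [mul_add, mul_add, mul_add, hab, hab, habab]

lemma hasDec_a_mul {m k : ℕ} {y : ExteriorAlgebra K (Fin (2*g) → K)}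
    (hy : HasDec K g m k y) : HasDec K g m (k+1) (ι K (u K g m) * y) := by
  obtain ⟨y0, y1, y2, y3, h0, h1, h2, h3, hz1, hz2, rfl⟩ := hy
  refine ⟨0, y0, 0, y2, zero_mem _, by simpa using h0, zero_mem _,
    by simpa [show k+1-2 = k-1 by omega] using h2, fun h => absurd h (by omega),
    fun h => (hz1 (by omega)).2, ?_⟩
  have e1 : ι K (u K g m) * (ι K (u K g m) * y1) = 0 := by rw [← mul_assoc, isq, zero_mul]
  have e2 : ι K (u K g m) * (ι K (u K g (g+m)) * y2)
      = ι K (u K g m) * ι K (u K g (g+m)) * y2 := by rw [mul_assoc]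
  have e3 : ι K (u K g m) * (ι K (u K g m) * ι K (u K g (g+m)) * y3) = 0 := by
    rw [← mul_assoc, ← mul_assoc, isq, zero_mul, zero_mul]
  rw [mul_add, mul_add, mul_add, e1, e2, e3]
  simp only [mul_zero, add_zero]
  abel

lemma hasDec_b_mul {m k : ℕ} {y : ExteriorAlgebra K (Fin (2*g) → K)}
    (hy : HasDec K g m k y) : HasDec K g m (k+1) (ι K (u K g (g+m)) * y) := by
  obtain ⟨y0, y1, y2, y3, h0, h1, h2, h3, hz1, hz2, rfl⟩ := hy
  refine ⟨0, 0, y0, -y1, zero_mem _, zero_mem _, by simpa using h0,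
    by simpa [show k+1-2 = k-1 by omega] using neg_mem h1, fun h => absurd h (by omega),
    fun h => by rw [(hz1 (by omega)).1, neg_zero], ?_⟩
  have e1 : ι K (u K g (g+m)) * (ι K (u K g m) * y1)
      = -(ι K (u K g m) * ι K (u K g (g+m)) * y1) := by
    rw [← mul_assoc, iswap (u K g (g+m)) (u K g m), neg_mul]
  have e2 : ι K (u K g (g+m)) * (ι K (u K g (g+m)) * y2) = 0 := by
    rw [← mul_assoc, isq, zero_mul]
  have e3 : ι K (u K g (g+m)) * (ι K (u K g m) * ι K (u K g (g+m)) * y3) = 0 := by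
    have h : ι K (u K g (g+m)) * (ι K (u K g m) * ι K (u K g (g+m))) = 0 := by
      rw [← mul_assoc, iswap (u K g (g+m)) (u K g m), neg_mul, mul_assoc, isq,
        mul_zero, neg_zero]
    rw [← mul_assoc, h, zero_mul]
  rw [mul_add, mul_add, mul_add, e1, e2, e3, mul_neg]
  simp only [mul_zero, add_zero]
  abel

lemma S_succ (m : ℕ) : S g (m+1) = S g m ∪ {m, g+m} := by
  ext j
  simp only [S, Set.mem_union, Set.mem_setOf_eq, Set.mem_insert_iff, Set.mem_singleton_iff]
  omega

lemma U_succ_mem {m : ℕ} {v : Fin (2*g) → K} (hv : v ∈ U K g (m+1)) :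
    ∃ v' ∈ U K g m, ∃ c1 c2 : K, v = v' + c1 • u K g m + c2 • u K g (g+m) := by
  rw [U, S_succ, Set.image_union, Submodule.span_union] at hv
  obtain ⟨v', hv', w, hw, rfl⟩ := Submodule.mem_sup.mp hv
  have : w ∈ Submodule.span K {u K g m, u K g (g+m)} := by
    refine Submodule.span_mono ?_ hw
    rintro _ ⟨j, hj, rfl⟩
    rcases hj with rfl | rfl
    · exact Or.inl rfl
    · exact Or.inr rfl
  obtain ⟨c1, c2, hw'⟩ := Submodule.mem_span_pair.mp this
  exact ⟨v', hv', c1, c2, by rw [← hw', add_assoc]⟩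

lemma decomp {m k : ℕ} {x : ExteriorAlgebra K (Fin (2*g) → K)}
    (hx : x ∈ E K g (m+1) k) : HasDec K g m k x := by
  induction k generalizing x with
  | zero =>
      refine ⟨x, 0, 0, 0, ?_, zero_mem _, zero_mem _, zero_mem _,
        fun _ => ⟨rfl, rfl⟩, fun _ => rfl, by simp⟩
      rw [E, pow_zero] at hx ⊢; exact hx
  | succ k ih =>
      rw [E, pow_succ'] at hx
      refine Submodule.mul_induction_on hx ?_ fun x y hx hy => hasDec_add hx hy
      rintro _ ⟨v, hv, rfl⟩ y hy
      obtain ⟨v', hv', c1, c2, rfl⟩ := U_succ_mem hv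
      have hdy := ih hy
      rw [map_add, map_add, map_smul, map_smul, add_mul, add_mul, smul_mul_assoc,
        smul_mul_assoc]
      exact hasDec_add (hasDec_add (hasDec_ι_mul hv' hdy) (hasDec_smul c1 (hasDec_a_mul hdy)))
        (hasDec_smul c2 (hasDec_b_mul hdy))

end Decomp

lemma W_mono {m : ℕ} : W K g m ≤ W K g (m+1) :=
  Submodule.map_mono (Submodule.span_mono (Set.image_mono (fun j hj => by
    simp only [S, Set.mem_setOf_eq] at hj ⊢; omega)))

lemma E_mono {m j : ℕ} : E K g m j ≤ E K g (m+1) j := by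
  rw [E, E]
  induction j with
  | zero => simp
  | succ j ih => rw [pow_succ, pow_succ]; exact mul_le_mul' ih W_mono

lemma W_zero_eq_bot : W K g 0 = ⊥ := by
  have hS : S g 0 = (∅ : Set ℕ) :=
    Set.eq_empty_iff_forall_notMem.mpr (fun j hj => by
      rcases hj with h | ⟨h1, h2⟩ <;> omega)
  rw [W, U, hS]
  simp

lemma E_zero_eq_bot {j : ℕ} (hj : 1 ≤ j) : E K g 0 j = ⊥ := by
  obtain ⟨j', rfl⟩ := Nat.exists_eq_add_of_le hj
  rw [E, W_zero_eq_bot, pow_add, pow_one, Submodule.bot_mul]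

lemma E_high_eq_zero : ∀ m j, 2*m < j → ∀ x ∈ E K g m j, x = 0 := by
  intro m
  induction m with
  | zero =>
      intro j hj x hx
      rw [E_zero_eq_bot (by omega)] at hx
      simpa using hx
  | succ m ih =>
      intro j hj x hx
      obtain ⟨x0, x1, x2, x3, h0, h1, h2, h3, _, _, rfl⟩ := decomp hx
      rw [ih j (by omega) x0 h0, ih (j-1) (by omega) x1 h1, ih (j-1) (by omega) x2 h2,
        ih (j-2) (by omega) x3 h3]
      simp

lemma components_eq_zero {m : ℕ} (α β : Module.Dual K (Fin (2*g) → K))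
    (hαU : ∀ v ∈ U K g m, α v = 0) (hβU : ∀ v ∈ U K g m, β v = 0)
    (hαa : α (u K g m) = 1) (hαb : α (u K g (g+m)) = 0)
    (hβa : β (u K g m) = 0) (hβb : β (u K g (g+m)) = 1)
    {k0 k1 k2 k3 : ℕ} {y0 y1 y2 y3 : ExteriorAlgebra K (Fin (2*g) → K)}
    (h0 : y0 ∈ E K g m k0) (h1 : y1 ∈ E K g m k1)
    (h2 : y2 ∈ E K g m k2) (h3 : y3 ∈ E K g m k3)
    (hsum : y0 + ι K (u K g m) * y1 + ι K (u K g (g+m)) * y2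
        + ι K (u K g m) * ι K (u K g (g+m)) * y3 = 0) :
    y0 = 0 ∧ y1 = 0 ∧ y2 = 0 ∧ y3 = 0 := by
  have cα0 := contract_eq_zero α hαU h0
  have cα1 := contract_eq_zero α hαU h1
  have cα2 := contract_eq_zero α hαU h2
  have cα3 := contract_eq_zero α hαU h3
  have cβ0 := contract_eq_zero β hβU h0
  have cβ1 := contract_eq_zero β hβU h1
  have cβ2 := contract_eq_zero β hβU h2
  have cβ3 := contract_eq_zero β hβU h3
  -- contract hsum with α
  have E1 : y1 + ι K (u K g (g+m)) * y3 = 0 := by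
    have h' := congrArg (CliffordAlgebra.contractLeft α) hsum
    simp only [map_zero, map_add, mul_assoc, CliffordAlgebra.contractLeft_ι_mul,
      cα0, cα1, cα2, cα3, hαa, hαb, one_smul, zero_smul, mul_zero, sub_zero, zero_sub,
      smul_zero, neg_zero, zero_add, add_zero, mul_neg] at h'
    exact h'
  have hy3 : y3 = 0 := by
    have := congrArg (CliffordAlgebra.contractLeft β) E1
    rw [map_zero, map_add, CliffordAlgebra.contractLeft_ι_mul, cβ1, cβ3, hβb,
      one_smul, mul_zero, sub_zero, zero_add] at this
    exact this
  have hy1 : y1 = 0 := by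
    rw [hy3, mul_zero, add_zero] at E1; exact E1
  have E2 : y0 + ι K (u K g (g+m)) * y2 = 0 := by
    rw [hy1, hy3, mul_zero, mul_zero, add_zero, add_zero] at hsum; exact hsum
  have hy2 : y2 = 0 := by
    have := congrArg (CliffordAlgebra.contractLeft β) E2
    rw [map_zero, map_add, CliffordAlgebra.contractLeft_ι_mul, cβ0, cβ2, hβb,
      one_smul, mul_zero, sub_zero, zero_add] at this
    exact this
  have hy0 : y0 = 0 := by
    rw [hy2, mul_zero, add_zero] at E2; exact E2
  exact ⟨hy0, hy1, hy2, hy3⟩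

lemma pow_add_of_sq_eq_zero {A : Type*} [Ring A] {x y : A} (h : x * y = y * x)
    (hy : y * y = 0) : ∀ n : ℕ, (x + y) ^ n = x ^ n + n • (x ^ (n - 1) * y)
  | 0 => by simp
  | 1 => by simp
  | (n+2) => by
      have ih := pow_add_of_sq_eq_zero h hy (n+1)
      rw [pow_succ, ih, add_mul, mul_add, mul_add, smul_mul_assoc, smul_mul_assoc]
      have e1 : x ^ (n+1) * x = x ^ (n+2) := by rw [← pow_succ]
      have e2 : x ^ (n+1-1) * y * x = x ^ (n+1) * y := by
        rw [mul_assoc, ← h, ← mul_assoc, Nat.add_sub_cancel, ← pow_succ]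
      have e3 : x ^ (n+1-1) * y * y = 0 := by rw [mul_assoc, hy, mul_zero]
      rw [e1, e2, e3, smul_zero, add_zero, show n+2-1 = n+1 from rfl,
        succ_nsmul (x ^ (n+1) * y) (n+1)]
      abel

lemma ab_sq_zero (v w : Fin (2*g) → K) : (ι K v * ι K w) * (ι K v * ι K w) = 0 := by
  have h1 : ι K w * (ι K v * ι K w) = 0 := by
    rw [← mul_assoc, iswap w v, neg_mul, mul_assoc, isq, mul_zero, neg_zero]
  rw [mul_assoc, h1, mul_zero]

lemma ω_succ (m : ℕ) : ω K g (m+1) = ω K g m + ι K (u K g m) * ι K (u K g (g+m)) :=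
  Finset.sum_range_succ _ _

set_option maxHeartbeats 1000000 in
lemma expand {m n : ℕ} (x0 x1 x2 x3 : ExteriorAlgebra K (Fin (2*g) → K)) :
    ω K g (m+1) ^ n * (x0 + ι K (u K g m) * x1 + ι K (u K g (g+m)) * x2
        + ι K (u K g m) * ι K (u K g (g+m)) * x3)
    = ω K g m ^ n * x0 + ι K (u K g m) * (ω K g m ^ n * x1)
      + ι K (u K g (g+m)) * (ω K g m ^ n * x2)
      + ι K (u K g m) * ι K (u K g (g+m))
          * (ω K g m ^ n * x3 + n • (ω K g m ^ (n-1) * x0)) := by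
  set a := ι K (u K g m) with ha
  set b := ι K (u K g (g+m)) with hb
  set w := ω K g m with hw
  have hcomm : ∀ z : ExteriorAlgebra K (Fin (2*g) → K), w * z = z * w :=
    fun z => (ω_commute m z).eq
  have habc : ∀ z : ExteriorAlgebra K (Fin (2*g) → K), (a*b) * z = z * (a*b) :=
    fun z => (central2 _ _ z).eq
  have hbin : ω K g (m+1) ^ n = w ^ n + n • (w ^ (n-1) * (a * b)) := by
    rw [ω_succ, pow_add_of_sq_eq_zero (hcomm (a*b)) (ab_sq_zero _ _)]
  have hwp : ∀ (j : ℕ) (z : ExteriorAlgebra K (Fin (2*g) → K)), w ^ j * z = z * w ^ j :=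
    fun j z => ((ω_commute m z).pow_left j).eq
  have t1 : w ^ n * (a * x1) = a * (w ^ n * x1) := by
    rw [← mul_assoc, hwp n a, mul_assoc]
  have t2 : w ^ n * (b * x2) = b * (w ^ n * x2) := by
    rw [← mul_assoc, hwp n b, mul_assoc]
  have t3 : w ^ n * (a * b * x3) = a * b * (w ^ n * x3) := by
    rw [← mul_assoc, hwp n (a*b), mul_assoc]
  have t4 : w ^ (n-1) * (a * b) * x0 = a * b * (w ^ (n-1) * x0) := by
    rw [hwp (n-1) (a*b), mul_assoc]
  have hba : b * a = -(a * b) := iswap _ _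
  have haa : a * a = 0 := isq _
  have hbb : b * b = 0 := isq _
  have haba : a * b * a = 0 := by
    rw [mul_assoc, hba, mul_neg, ← mul_assoc, haa, zero_mul, neg_zero]
  have habb : a * b * b = 0 := by rw [mul_assoc, hbb, mul_zero]
  have t5 : w ^ (n-1) * (a * b) * (a * x1) = 0 := by
    rw [mul_assoc, ← mul_assoc (a*b), haba, zero_mul, mul_zero]
  have t6 : w ^ (n-1) * (a * b) * (b * x2) = 0 := by
    rw [mul_assoc, ← mul_assoc (a*b), habb, zero_mul, mul_zero]
  have t7 : w ^ (n-1) * (a * b) * (a * b * x3) = 0 := by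
    rw [mul_assoc, ← mul_assoc (a*b), ab_sq_zero, zero_mul, mul_zero]
  rw [hbin, add_mul, mul_add, mul_add, mul_add, t1, t2, t3,
    smul_mul_assoc, mul_add, mul_add, mul_add, t4, t5, t6, t7, mul_add,
    mul_smul_comm]
  simp only [smul_zero, add_zero]
  abel

lemma proj_u {i : Fin (2*g)} {j : ℕ} (hj : j < 2*g) :
    LinearMap.proj (R := K) (φ := fun _ : Fin (2*g) => K) i (u K g j)
      = if (i : ℕ) = j then 1 else 0 := by
  rw [u, dif_pos hj]
  simp only [LinearMap.proj_apply, Pi.single_apply, Fin.ext_iff]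

lemma dual_kill {m : ℕ} (d : Module.Dual K (Fin (2*g) → K))
    (hd : ∀ j ∈ S g m, d (u K g j) = 0) : ∀ v ∈ U K g m, d v = 0 := by
  intro v hv
  have hle : U K g m ≤ LinearMap.ker d :=
    Submodule.span_le.mpr (by rintro _ ⟨j, hj, rfl⟩; exact hd j hj)
  exact hle hv

set_option maxHeartbeats 2000000 in
theorem key [CharZero K] : ∀ m : ℕ, m ≤ g → ∀ k : ℕ, k ≤ m →
    (∀ x ∈ E K g m k, ω K g m ^ (m-k) * x = 0 → x = 0) ∧
    (∀ z ∈ E K g m (2*m-k), ∃ x ∈ E K g m k, ω K g m ^ (m-k) * x = z) := by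
  intro m
  induction m with
  | zero =>
      intro _ k hk
      interval_cases k
      exact ⟨fun x _ h => by simpa using h, fun z hz => ⟨z, hz, by simp⟩⟩
  | succ m ih =>
      intro hm1 k hk
      have hmg : m ≤ g := by omega
      have ih' := ih hmg
      by_cases hks : k = m + 1
      · subst hks
        constructor
        · intro x _ h
          rw [Nat.sub_self, pow_zero, one_mul] at h
          exact h
        · intro z hz
          rw [show 2*(m+1)-(m+1) = m+1 by omega] at hz
          exact ⟨z, hz, by rw [Nat.sub_self, pow_zero, one_mul]⟩
      have hk' : k ≤ m := by omega
      have hm2 : m < 2*g := by omega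
      have hgm2 : g + m < 2*g := by omega
      set α : Module.Dual K (Fin (2*g) → K) :=
        LinearMap.proj (R := K) (⟨m, hm2⟩ : Fin (2*g)) with hα
      set β : Module.Dual K (Fin (2*g) → K) :=
        LinearMap.proj (R := K) (⟨g+m, hgm2⟩ : Fin (2*g)) with hβ
      have hαa : α (u K g m) = 1 := by rw [hα, proj_u hm2]; simp
      have hαb : α (u K g (g+m)) = 0 := by
        rw [hα, proj_u hgm2]; simp only [ite_eq_right_iff]; omega
      have hβa : β (u K g m) = 0 := by
        rw [hβ, proj_u hm2]; simp only [ite_eq_right_iff]; omega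
      have hβb : β (u K g (g+m)) = 1 := by rw [hβ, proj_u hgm2]; simp
      have hαU : ∀ v ∈ U K g m, α v = 0 := by
        refine dual_kill α fun j hj => ?_
        have hj2 : j < 2*g := by rcases hj with h | ⟨h1, h2⟩ <;> omega
        rw [hα, proj_u hj2]
        simp only [ite_eq_right_iff]
        rcases hj with h | ⟨h1, h2⟩ <;> omega
      have hβU : ∀ v ∈ U K g m, β v = 0 := by
        refine dual_kill β fun j hj => ?_
        have hj2 : j < 2*g := by rcases hj with h | ⟨h1, h2⟩ <;> omega
        rw [hβ, proj_u hj2]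
        simp only [ite_eq_right_iff]
        rcases hj with h | ⟨h1, h2⟩ <;> omega
      set n := m + 1 - k with hn
      have hn1 : 1 ≤ n := by omega
      have he1 : n - 1 = m - k := by omega
      have hnK : (n : K) ≠ 0 := Nat.cast_ne_zero.mpr (by omega)
      have ha_mem : u K g m ∈ U K g (m+1) := u_mem_U (Or.inl (by omega))
      have hb_mem : u K g (g+m) ∈ U K g (m+1) := u_mem_U (Or.inr ⟨by omega, by omega⟩)
      constructor
      · -- injectivity
        intro x hx hzero
        obtain ⟨x0, x1, x2, x3, h0, h1, h2, h3, hz1, hz2, rfl⟩ := decomp hx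
        rw [expand] at hzero
        have hy3mem : ω K g m ^ n * x3 + n • (ω K g m ^ (n-1) * x0)
            ∈ E K g m (2*(n-1)+k) := by
          refine add_mem ?_ (nsmul_mem (ω_pow_mul_mem_E h0) n)
          rcases Nat.lt_or_ge k 2 with hk2 | hk2
          · rw [hz2 (by omega), mul_zero]; exact zero_mem _
          · have := ω_pow_mul_mem_E (n := n) h3
            rwa [show 2*n + (k-2) = 2*(n-1)+k by omega] at this
        obtain ⟨C0, C1, C2, C3⟩ := components_eq_zero α β hαU hβU hαa hαb hβa hβb
          (ω_pow_mul_mem_E (n := n) h0) (ω_pow_mul_mem_E (n := n) h1)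
          (ω_pow_mul_mem_E (n := n) h2) hy3mem hzero
        -- x1, x2
        have hx1 : x1 = 0 := by
          rcases Nat.eq_zero_or_pos k with hk0 | hk0
          · exact (hz1 hk0).1
          · refine (ih' (k-1) (by omega)).1 x1 h1 ?_
            rwa [show m - (k-1) = n by omega]
        have hx2 : x2 = 0 := by
          rcases Nat.eq_zero_or_pos k with hk0 | hk0
          · exact (hz1 hk0).2
          · refine (ih' (k-1) (by omega)).1 x2 h2 ?_
            rwa [show m - (k-1) = n by omega]
        -- x3
        have hx3 : x3 = 0 := by
          rcases Nat.lt_or_ge k 2 with hk2 | hk2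
          · exact hz2 (by omega)
          · have hC3' := congrArg (fun y => ω K g m * y) C3
            simp only [mul_add, mul_zero] at hC3'
            rw [← mul_assoc, ← pow_succ', mul_smul_comm, ← mul_assoc, ← pow_succ',
              show n - 1 + 1 = n by omega, C0, smul_zero, add_zero] at hC3'
            refine (ih' (k-2) (by omega)).1 x3 h3 ?_
            rwa [show m - (k-2) = n + 1 by omega]
        -- x0
        have hx0 : x0 = 0 := by
          rw [hx3, mul_zero, zero_add, ← Nat.cast_smul_eq_nsmul K, smul_eq_zero] at C3
          have hω : ω K g m ^ (n-1) * x0 = 0 := C3.resolve_left hnK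
          rw [he1] at hω
          exact (ih' k hk').1 x0 h0 hω
        rw [hx0, hx1, hx2, hx3]
        simp
      · -- surjectivity
        intro z hz
        obtain ⟨z0, z1, z2, z3, h0, h1, h2, h3, hzz1, hzz2, rfl⟩ := decomp hz
        rw [show 2*(m+1)-k - 1 = 2*m+1-k by omega] at h1 h2
        rw [show 2*(m+1)-k - 2 = 2*m-k by omega] at h3
        -- x1 and x2
        have hx1 : ∃ x1 ∈ E K g m (k-1), ω K g m ^ n * x1 = z1 ∧ (k = 0 → x1 = 0) := by
          rcases Nat.eq_zero_or_pos k with hk0 | hk0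
          · refine ⟨0, zero_mem _, ?_, fun _ => rfl⟩
            rw [mul_zero]
            exact (E_high_eq_zero m _ (by omega) z1 h1).symm
          · obtain ⟨x1, hm1', he'⟩ := (ih' (k-1) (by omega)).2 z1
              (by rwa [show 2*m - (k-1) = 2*m+1-k by omega])
            exact ⟨x1, hm1', by rwa [show m - (k-1) = n by omega] at he',
              fun h => absurd h (by omega)⟩
        have hx2 : ∃ x2 ∈ E K g m (k-1), ω K g m ^ n * x2 = z2 ∧ (k = 0 → x2 = 0) := by
          rcases Nat.eq_zero_or_pos k with hk0 | hk0
          · refine ⟨0, zero_mem _, ?_, fun _ => rfl⟩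
            rw [mul_zero]
            exact (E_high_eq_zero m _ (by omega) z2 h2).symm
          · obtain ⟨x2, hm2', he'⟩ := (ih' (k-1) (by omega)).2 z2
              (by rwa [show 2*m - (k-1) = 2*m+1-k by omega])
            exact ⟨x2, hm2', by rwa [show m - (k-1) = n by omega] at he',
              fun h => absurd h (by omega)⟩
        obtain ⟨x1, hx1m, hx1e, hx1z⟩ := hx1
        obtain ⟨x2, hx2m, hx2e, hx2z⟩ := hx2
        -- x3
        have hx3 : ∃ x3 ∈ E K g m (k-2), ω K g m ^ (n+1) * x3 = ω K g m * z3 - n • z0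
            ∧ (k < 2 → x3 = 0) := by
          rcases Nat.lt_or_ge k 2 with hk2 | hk2
          · refine ⟨0, zero_mem _, ?_, fun _ => rfl⟩
            have hz3' : ω K g m * z3 = 0 :=
              E_high_eq_zero m _ (by omega) _ (mul_mem_E (ω_mem_E m) h3)
            have hz0' : z0 = 0 := E_high_eq_zero m _ (by omega) z0 h0
            rw [mul_zero, hz3', hz0', smul_zero, sub_zero]
          · have hmem : ω K g m * z3 - n • z0 ∈ E K g m (2*m - (k-2)) := by
              refine sub_mem ?_ (nsmul_mem ?_ n)
              · have := mul_mem_E (ω_mem_E m) h3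
                rwa [show 2 + (2*m-k) = 2*m - (k-2) by omega] at this
              · rwa [show 2*(m+1)-k = 2*m - (k-2) by omega] at h0
            obtain ⟨x3, hm3', he'⟩ := (ih' (k-2) (by omega)).2 _ hmem
            exact ⟨x3, hm3', by rwa [show m - (k-2) = n + 1 by omega] at he',
              fun h => absurd h (by omega)⟩
        obtain ⟨x3, hx3m, hx3e, hx3z⟩ := hx3
        -- y and x0
        have hy : (n : K)⁻¹ • (z3 - ω K g m ^ n * x3) ∈ E K g m (2*m - k) := by
          refine Submodule.smul_mem _ _ (sub_mem h3 ?_)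
          rcases Nat.lt_or_ge k 2 with hk2 | hk2
          · rw [hx3z hk2, mul_zero]; exact zero_mem _
          · have := ω_pow_mul_mem_E (n := n) hx3m
            rwa [show 2*n + (k-2) = 2*m-k by omega] at this
        obtain ⟨x0, hx0m, hx0e⟩ := (ih' k hk').2 _ hy
        rw [← he1] at hx0e
        -- the preimage
        refine ⟨x0 + ι K (u K g m) * x1 + ι K (u K g (g+m)) * x2
            + ι K (u K g m) * ι K (u K g (g+m)) * x3, ?_, ?_⟩
        · refine add_mem (add_mem (add_mem (E_mono hx0m) ?_) ?_) ?_
          · exact ι_mul_shift ha_mem (E_mono hx1m) hx1z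
          · exact ι_mul_shift hb_mem (E_mono hx2m) hx2z
          · rw [mul_assoc]
            refine ι_mul_shift ha_mem (j := k) ?_ ?_
            · refine ι_mul_shift hb_mem (j := k-1) ?_ ?_
              · rw [show k-1-1 = k-2 by omega]; exact E_mono hx3m
              · intro h; exact hx3z (by omega)
            · intro h; rw [hx3z (by omega), mul_zero]
        · rw [expand, hx1e, hx2e]
          have hc3 : ω K g m ^ n * x3 + n • (ω K g m ^ (n-1) * x0) = z3 := by
            rw [hx0e, ← Nat.cast_smul_eq_nsmul K, smul_smul,
              mul_inv_cancel₀ hnK, one_smul]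
            abel
          have hc0 : ω K g m ^ n * x0 = z0 := by
            rw [show n = (n-1)+1 by omega, pow_succ', mul_assoc, hx0e, mul_smul_comm,
              mul_sub]
            rw [show ω K g m * (ω K g m ^ n * x3) = ω K g m ^ (n+1) * x3 by
              rw [← mul_assoc, ← pow_succ'], hx3e, sub_sub_cancel,
              ← Nat.cast_smul_eq_nsmul K, smul_smul, inv_mul_cancel₀ hnK, one_smul]
          rw [hc3, hc0]

lemma U_top : U K g g = ⊤ := by
  rw [eq_top_iff]
  intro v _
  have hv : v = ∑ i : Fin (2*g), Pi.single i (v i) := (Finset.univ_sum_single v).symm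
  rw [hv]
  refine Submodule.sum_mem _ fun i _ => ?_
  have h1 : Pi.single i (v i) = v i • u K g (i : ℕ) := by
    rw [u, dif_pos i.isLt, Fin.eta, ← Pi.single_smul, smul_eq_mul, mul_one]
  rw [h1]
  refine Submodule.smul_mem _ _ (Submodule.subset_span ⟨(i : ℕ), ?_, rfl⟩)
  have := i.isLt
  simp only [S, Set.mem_setOf_eq]
  omega

lemma W_top : W K g g = LinearMap.range (ι K : (Fin (2*g) → K) →ₗ[K] _) := by
  rw [W, U_top, Submodule.map_top]

lemma E_top (k : ℕ) : E K g g k = ⋀[K]^k (Fin (2*g) → K) := by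
  rw [E, W_top]

end HL

open HL

/-- Hard Lefschetz for the exterior algebra: over a field `K` of characteristic zero, with
`V = K^{2g}` and `ω = Σ_{i=1}^{g} e_i ∧ e_{g+i}`, for every `0 ≤ k ≤ g` the map
`x ↦ ω^{g−k} ∧ x` is a linear isomorphism `⋀^k V ≃ ⋀^{2g−k} V`. -/
theorem hard_lefschetz_exterior (K : Type*) [Field K] [CharZero K] (g : ℕ) (hg : 1 ≤ g)
    (k : ℕ) (hk : k ≤ g) :
    ∃ e : (⋀[K]^k (Fin (2 * g) → K)) ≃ₗ[K] (⋀[K]^(2 * g - k) (Fin (2 * g) → K)),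
      ∀ x : ⋀[K]^k (Fin (2 * g) → K),
        (e x : ExteriorAlgebra K (Fin (2 * g) → K)) =
          (∑ i : Fin g,
              ι K (Pi.single (⟨i.1, by omega⟩ : Fin (2 * g)) (1 : K)) *
                ι K (Pi.single (⟨g + i.1, by omega⟩ : Fin (2 * g)) (1 : K))) ^ (g - k) *
            (x : ExteriorAlgebra K (Fin (2 * g) → K)) := by
  have hω : ω K g g = ∑ i : Fin g,
      ι K (Pi.single (⟨i.1, by omega⟩ : Fin (2 * g)) (1 : K)) *
        ι K (Pi.single (⟨g + i.1, by omega⟩ : Fin (2 * g)) (1 : K)) := by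
    rw [ω, ← Fin.sum_univ_eq_sum_range]
    refine Finset.sum_congr rfl fun i _ => ?_
    rw [u, dif_pos (show (i : ℕ) < 2*g by omega), u,
      dif_pos (show g + (i : ℕ) < 2*g by omega)]
  obtain ⟨hinj, hsurj⟩ := key (K := K) (g := g) g le_rfl k hk
  have hmul : ∀ x : ⋀[K]^k (Fin (2 * g) → K),
      ω K g g ^ (g - k) * (x : ExteriorAlgebra K (Fin (2 * g) → K))
        ∈ ⋀[K]^(2 * g - k) (Fin (2 * g) → K) := by
    intro x
    have hx : (x : ExteriorAlgebra K (Fin (2 * g) → K)) ∈ E K g g k := by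
      rw [E_top]; exact x.2
    have := ω_pow_mul_mem_E (n := g - k) hx
    rw [show 2*(g-k) + k = 2*g - k by omega, E_top] at this
    exact this
  set L : (⋀[K]^k (Fin (2 * g) → K)) →ₗ[K] (⋀[K]^(2 * g - k) (Fin (2 * g) → K)) :=
    LinearMap.codRestrict _ ((LinearMap.mulLeft K (ω K g g ^ (g - k))).comp
      (Submodule.subtype _)) hmul with hL
  have hLapp : ∀ x : ⋀[K]^k (Fin (2 * g) → K),
      (L x : ExteriorAlgebra K (Fin (2 * g) → K))
        = ω K g g ^ (g - k) * (x : ExteriorAlgebra K (Fin (2 * g) → K)) := fun x => rfl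
  have hbij : Function.Bijective L := by
    constructor
    · intro x y hxy
      have h : ω K g g ^ (g - k) * ((x : ExteriorAlgebra K (Fin (2 * g) → K)) - y) = 0 := by
        rw [mul_sub, ← hLapp, ← hLapp, hxy, sub_self]
      have hx : ((x : ExteriorAlgebra K (Fin (2 * g) → K)) - y) ∈ E K g g k := by
        rw [E_top]; exact sub_mem x.2 y.2
      have := hinj _ hx h
      exact Subtype.ext (by rwa [sub_eq_zero] at this)
    · intro z
      have hz : (z : ExteriorAlgebra K (Fin (2 * g) → K)) ∈ E K g g (2*g - k) := by
        rw [E_top]; exact z.2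
      obtain ⟨x, hxm, hxe⟩ := hsurj _ hz
      rw [E_top] at hxm
      exact ⟨⟨x, hxm⟩, Subtype.ext (by rw [hLapp]; exact hxe)⟩
  refine ⟨LinearEquiv.ofBijective L hbij, fun x => ?_⟩
  rw [LinearEquiv.ofBijective_apply, hLapp, hω]
end
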